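/- Let E be a directed graph in which no entry to a cycle is in a cycle. Suppose there is a path x ∈ E^∞ such that for each n ∈ ℕ the set x(n)E^∞ ∩ [x] has more than one element. Then there is a path y ∈ E^∞ that does not contain a cycle and such that for each n ∈ ℕ the set y(n)E^∞ ∩ [y] has more than one element. -/
import Mathlib


/-- A directed graph: countable sets of vertices and edges, with range and source
maps. -/
structure DGraph : Type 1 where
  V : Type
  E : Type
  countableV : Countable V
  countableE : Countable E
  r : E → V
  s : E → V

namespace DGraph

/-- `E` is row-finite: every vertex receives only finitely many edges. -/
def RowFinite (G : DGraph) : Prop := ∀ v : G.V, {e : G.E | G.r e = v}.Finite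

/-- A source of `E`: a vertex receiving no edges. -/
def IsSource (G : DGraph) (v : G.V) : Prop := ∀ e : G.E, G.r e ≠ v

end DGraph

/-- A (finite or infinite) path in the directed graph `G`.  `edge i` is the
`(i+1)`-st edge of the path (or `none` beyond the end of the path); once `none`
always `none`, so a path is either a vertex (`rng`, with no edges), a finite path,
or an infinite path.  Edges are composed so that `s(edge i) = r(edge (i+1))`. -/
structure LPath (G : DGraph) where
  rng : G.V
  edge : ℕ → Option G.E
  edge_closed : ∀ i, edge i = none → edge (i + 1) = none
  rng_compat : ∀ e, edge 0 = some e → G.r e = rng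
  compat : ∀ i e f, edge i = some e → edge (i + 1) = some f → G.s e = G.r f

namespace LPath

variable {G : DGraph}

/-- The vertex `x(n)` of the path `x` (a junk value, the range, beyond the length
of the path). -/
def vert (x : LPath G) : ℕ → G.V
  | 0 => x.rng
  | n + 1 =>
    match x.edge n with
    | some e => G.s e
    | none => x.rng

/-- `x` is an infinite path, i.e. a member of `E^∞`. -/
def Infinite (x : LPath G) : Prop := ∀ i, (x.edge i).isSome

/-- `n ≤ |x|`: the first `n` edges of `x` all exist. -/
def LeLen (x : LPath G) (n : ℕ) : Prop := ∀ i, i < n → (x.edge i).isSome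

/-- `|x| = n`: `x` is a finite path of length `n`. -/
def LenEq (x : LPath G) (n : ℕ) : Prop := x.edge n = none ∧ x.LeLen n

theorem vert_eq (x : LPath G) (m : ℕ) (e : G.E) (h : x.edge m = some e) :
    G.r e = x.vert m := by
  cases m with
  | zero => exact x.rng_compat e h
  | succ n =>
    cases hn : x.edge n with
    | none => exact absurd h (by simp [x.edge_closed n hn])
    | some f =>
      have hc := x.compat n f e hn h
      simp only [vert, hn]
      exact hc.symm

/-- The shifted path `σ^m(x)` (meaningful when `m ≤ |x|`). -/
def shift (x : LPath G) (m : ℕ) : LPath G where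
  rng := x.vert m
  edge i := x.edge (m + i)
  edge_closed i h := x.edge_closed (m + i) h
  rng_compat e he := x.vert_eq m e he
  compat i e f he hf := x.compat (m + i) e f he hf

/-- `x` is shift equivalent to `y` with lag `n ∈ ℤ`: there are `p, q ∈ ℕ` with
`p - q = n`, `p ≤ |x|`, `q ≤ |y|` and `σ^p(x) = σ^q(y)`. -/
def ShiftEquivLag (x y : LPath G) (n : ℤ) : Prop :=
  ∃ p q : ℕ, (p : ℤ) - (q : ℤ) = n ∧ x.LeLen p ∧ y.LeLen q ∧ x.shift p = y.shift q

/-- `x` is shift equivalent to `y`. -/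
def ShiftEquiv (x y : LPath G) : Prop := ∃ n : ℤ, ShiftEquivLag x y n

/-- `x` belongs to `E^{≤∞}`: it is infinite, or finite with its source a source
of the graph. -/
def Boundary (x : LPath G) : Prop :=
  x.Infinite ∨ ∃ n : ℕ, x.LenEq n ∧ G.IsSource (x.vert n)

/-- `x` is frequently divertable to `[y]`: for every `n ≤ |x|` there is a path in
`x(n)E^{≤∞}` that is shift equivalent to `y`. -/
def FreqDiv (x y : LPath G) : Prop :=
  ∀ n : ℕ, x.LeLen n → ∃ z : LPath G, z.Boundary ∧ z.rng = x.vert n ∧ ShiftEquiv z y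

/-- The segment `x(m, n)` of `x` is a cycle: it is closed (`x(m) = x(n)`) and the
sources `x(i)`, `m < i ≤ n`, of its edges are pairwise distinct. -/
def HasCycleAt (x : LPath G) (m n : ℕ) : Prop :=
  m < n ∧ x.LeLen n ∧ x.vert m = x.vert n ∧
    ∀ i j, m < i → i ≤ n → m < j → j ≤ n → x.vert i = x.vert j → i = j

/-- `x` contains a cycle. -/
def ContainsCycle (x : LPath G) : Prop := ∃ m n, x.HasCycleAt m n

end LPath

/-- A cycle in `G`: a finite path `α = α_1 ⋯ α_len` (here 0-indexed, and with junk
values of `edge` beyond `len`) of non-zero length with `r(α) = s(α)` and whose edges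
have pairwise distinct sources. -/
structure DCycle (G : DGraph) where
  len : ℕ
  len_pos : 0 < len
  edge : ℕ → G.E
  compat : ∀ i, i + 1 < len → G.s (edge i) = G.r (edge (i + 1))
  closed : G.s (edge (len - 1)) = G.r (edge 0)
  distinct : ∀ i j, i < len → j < len → G.s (edge i) = G.s (edge j) → i = j

namespace DCycle

variable {G : DGraph}

/-- `f` is an entry to the cycle `c`: `r(f) = r(c_i)` and `f ≠ c_i` for some `i`. -/
def IsEntry (c : DCycle G) (f : G.E) : Prop :=
  ∃ i, i < c.len ∧ G.r f = G.r (c.edge i) ∧ f ≠ c.edge i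

/-- The edge `f` lies in the cycle `c`. -/
def EdgeMem (c : DCycle G) (f : G.E) : Prop := ∃ i, i < c.len ∧ c.edge i = f

end DCycle


section Aux
namespace LPath
variable {G : DGraph}

theorem ext' (x y : LPath G) (h1 : x.rng = y.rng) (h2 : ∀ i, x.edge i = y.edge i) :
    x = y := by
  cases x; cases y
  simp only [mk.injEq]
  exact ⟨h1, funext h2⟩

theorem vert_some (x : LPath G) {n : ℕ} {e : G.E} (h : x.edge n = some e) :
    x.vert (n + 1) = G.s e := by simp [vert, h]

theorem leLen_of_infinite {x : LPath G} (hx : x.Infinite) (n : ℕ) : x.LeLen n :=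
  fun i _ => hx i

/-- The `i`-th edge of an infinite path, as an honest edge. -/
noncomputable def ie (x : LPath G) (hx : x.Infinite) (i : ℕ) : G.E :=
  (x.edge i).get (hx i)

theorem ie_spec (x : LPath G) (hx : x.Infinite) (i : ℕ) :
    x.edge i = some (x.ie hx i) := by simp [ie]

theorem r_ie (x : LPath G) (hx : x.Infinite) (i : ℕ) :
    G.r (x.ie hx i) = x.vert i := vert_eq x i _ (ie_spec x hx i)

theorem s_ie (x : LPath G) (hx : x.Infinite) (i : ℕ) :
    G.s (x.ie hx i) = x.vert (i + 1) := (vert_some x (ie_spec x hx i)).symm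

theorem shift_infinite {x : LPath G} (hx : x.Infinite) (m : ℕ) :
    (x.shift m).Infinite := fun i => hx (m + i)

theorem vert_shift {x : LPath G} (hx : x.Infinite) (m n : ℕ) :
    (x.shift m).vert n = x.vert (m + n) := by
  cases n with
  | zero => rfl
  | succ k =>
    have h1 : (x.shift m).edge k = some (x.ie hx (m + k)) := ie_spec x hx (m + k)
    rw [vert_some _ h1, show m + (k+1) = (m+k)+1 by omega, ← s_ie x hx (m+k)]

theorem shift_shift {x : LPath G} (hx : x.Infinite) (m n : ℕ) :
    (x.shift m).shift n = x.shift (m + n) := by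
  refine ext' _ _ ?_ ?_
  · exact vert_shift hx m n
  · intro i
    show x.edge (m + (n + i)) = x.edge (m + n + i)
    rw [Nat.add_assoc]

theorem shift_zero {x : LPath G} : x.shift 0 = x := by
  refine ext' _ _ rfl ?_
  intro i; show x.edge (0 + i) = x.edge i; rw [Nat.zero_add]

theorem shiftEquiv_of_shift_eq {z y : LPath G} (hz : z.Infinite) (hy : y.Infinite)
    (p q : ℕ) (h : z.shift p = y.shift q) : ShiftEquiv z y :=
  ⟨(p : ℤ) - q, p, q, rfl, leLen_of_infinite hz p, leLen_of_infinite hy q, h⟩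

theorem seq_trans {a x y : LPath G} (ha : a.Infinite) (hx : x.Infinite)
    (hy : y.Infinite) (hax : ShiftEquiv a x) (hyx : ShiftEquiv y x) :
    ShiftEquiv a y := by
  obtain ⟨_, p, q, -, -, -, h1⟩ := hax
  obtain ⟨_, p', q', -, -, -, h2⟩ := hyx
  refine shiftEquiv_of_shift_eq ha hy (p + q') (p' + q) ?_
  rw [← shift_shift ha, h1, shift_shift hx, Nat.add_comm q q', ← shift_shift hx,
    ← h2, shift_shift hy]

end LPath
end Aux

section Aux2
/-- A closed walk in `G`: like a cycle but sources may repeat. -/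
structure GWalk (G : DGraph) where
  len : ℕ
  len_pos : 0 < len
  edge : ℕ → G.E
  compat : ∀ i, i + 1 < len → G.s (edge i) = G.r (edge (i + 1))
  closed : G.s (edge (len - 1)) = G.r (edge 0)

namespace GWalk
variable {G : DGraph}

/-- Any closed walk contains a cycle through its first edge. -/
theorem exists_cycle (W : GWalk G) : ∃ c : DCycle G, c.edge 0 = W.edge 0 := by
  suffices H : ∀ n (W : GWalk G), W.len ≤ n → ∃ c : DCycle G, c.edge 0 = W.edge 0 by
    exact H W.len W le_rfl
  intro n
  induction n with
  | zero => intro W hW; exact absurd W.len_pos (by omega)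
  | succ n ih =>
    intro W hW
    by_cases hd : ∀ i j, i < W.len → j < W.len → G.s (W.edge i) = G.s (W.edge j) → i = j
    · exact ⟨⟨W.len, W.len_pos, W.edge, W.compat, W.closed, hd⟩, rfl⟩
    · push_neg at hd
      obtain ⟨i, j, hi, hj, hs, hij⟩ := hd
      obtain ⟨i, j, hi, hj, hs, hij⟩ : ∃ i j, i < W.len ∧ j < W.len ∧
          G.s (W.edge i) = G.s (W.edge j) ∧ i < j := by
        rcases Nat.lt_or_ge i j with hlt | hge
        · exact ⟨i, j, hi, hj, hs, hlt⟩
        · exact ⟨j, i, hj, hi, hs.symm, by omega⟩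
      set d := j - i with hd
      have hd1 : 1 ≤ d := by omega
      have hc1 : ∀ k, k + 1 < W.len - d →
          G.s ((fun k => if k ≤ i then W.edge k else W.edge (k + d)) k) =
          G.r ((fun k => if k ≤ i then W.edge k else W.edge (k + d)) (k + 1)) := by
        intro k hk
        rcases Nat.lt_or_ge k i with h1 | h1
        · simp only [if_pos (by omega : k ≤ i), if_pos (by omega : k + 1 ≤ i)]
          exact W.compat k (by omega)
        rcases Nat.eq_or_lt_of_le h1 with h2 | h2
        · subst h2
          simp only [if_pos (le_refl i), if_neg (by omega : ¬ i + 1 ≤ i)]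
          rw [hs, show i + 1 + d = j + 1 by omega]
          exact W.compat j (by omega)
        · simp only [if_neg (by omega : ¬ k ≤ i), if_neg (by omega : ¬ k + 1 ≤ i)]
          rw [show k + 1 + d = k + d + 1 by omega]
          exact W.compat (k + d) (by omega)
      have hc2 : G.s ((fun k => if k ≤ i then W.edge k else W.edge (k + d))
            (W.len - d - 1)) =
          G.r ((fun k => if k ≤ i then W.edge k else W.edge (k + d)) 0) := by
        simp only [if_pos (by omega : 0 ≤ i)]
        rcases Nat.eq_or_lt_of_le (show i + 1 ≤ W.len - d by omega) with h1 | h1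
        · have : W.len - d - 1 = i := by omega
          rw [this]
          simp only [if_pos (le_refl i)]
          rw [hs, show j = W.len - 1 by omega]
          exact W.closed
        · simp only [if_neg (by omega : ¬ W.len - d - 1 ≤ i)]
          rw [show W.len - d - 1 + d = W.len - 1 by omega]
          exact W.closed
      obtain ⟨c, hc⟩ := ih ⟨W.len - d, by omega,
        fun k => if k ≤ i then W.edge k else W.edge (k + d), hc1, hc2⟩ (by show W.len - d ≤ n; omega)
      refine ⟨c, ?_⟩
      rw [hc]; simp

end GWalk

namespace DCycle
variable {G : DGraph}

theorem mod_lt (c : DCycle G) (j : ℕ) : j % c.len < c.len := Nat.mod_lt _ c.len_pos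

theorem step (c : DCycle G) (j : ℕ) :
    G.s (c.edge (j % c.len)) = G.r (c.edge ((j + 1) % c.len)) := by
  have hL := c.len_pos
  rcases Nat.eq_or_lt_of_le (Nat.one_le_iff_ne_zero.mpr (Nat.pos_iff_ne_zero.mp hL))
    with h1 | h1
  · have e0 : ∀ m : ℕ, m % c.len = 0 := by intro m; rw [← h1, Nat.mod_one]
    rw [e0, e0]
    have := c.closed
    rwa [show c.len - 1 = 0 by omega] at this
  · have key : (j + 1) % c.len = (j % c.len + 1) % c.len := by
      conv_lhs => rw [Nat.add_mod]
      rw [Nat.mod_eq_of_lt (show 1 < c.len from h1)]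
    rcases Nat.lt_or_ge (j % c.len + 1) c.len with h2 | h2
    · rw [key, Nat.mod_eq_of_lt h2]
      exact c.compat _ h2
    · have h3 : j % c.len = c.len - 1 := by have := c.mod_lt j; omega
      have h4 : (j + 1) % c.len = 0 := by
        rw [key, h3, show c.len - 1 + 1 = c.len by omega, Nat.mod_self]
      rw [h3, h4]; exact c.closed

theorem edgeMem_self (c : DCycle G) : c.EdgeMem (c.edge 0) := ⟨0, c.len_pos, rfl⟩

end DCycle
end Aux2

section Aux3
namespace LPath
variable {G : DGraph}

theorem visits_finite
    (h : ∀ c : DCycle G, ∀ f : G.E, c.IsEntry f → ∀ c' : DCycle G, ¬ c'.EdgeMem f)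
    (x : LPath G) (hx : x.Infinite)
    (h2 : ∀ n : ℕ, ∃ z w : LPath G, z ≠ w ∧ z.Infinite ∧ w.Infinite ∧
      z.rng = x.vert n ∧ w.rng = x.vert n ∧
      LPath.ShiftEquiv z x ∧ LPath.ShiftEquiv w x)
    (v : G.V) : {t : ℕ | x.vert t = v}.Finite := by
  by_contra hfin'
  have hfin : {t : ℕ | x.vert t = v}.Infinite := hfin'
  obtain ⟨t0, ht0, -⟩ := hfin.exists_gt 0
  obtain ⟨t1, ht1, ht01⟩ := hfin.exists_gt t0
  have ht0v : x.vert t0 = v := ht0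
  have ht1v : x.vert t1 = v := ht1
  -- the closed walk from t0 to t1 yields a cycle c based at v
  have compat0 : ∀ i, i + 1 < t1 - t0 →
      G.s (x.ie hx (t0 + i)) = G.r (x.ie hx (t0 + (i + 1))) := by
    intro i _
    rw [s_ie x hx, r_ie x hx, show t0 + i + 1 = t0 + (i + 1) by omega]
  obtain ⟨c, hc0⟩ := GWalk.exists_cycle
    ⟨t1 - t0, by omega, fun i => x.ie hx (t0 + i), compat0, by
      show G.s (x.ie hx (t0 + (t1 - t0 - 1))) = G.r (x.ie hx (t0 + 0))
      rw [s_ie x hx, r_ie x hx, show t0 + (t1 - t0 - 1) + 1 = t1 by omega,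
        show t0 + 0 = t0 by omega, ht0v, ht1v]⟩
  have hvc0 : G.r (c.edge 0) = v := by
    rw [hc0]
    show G.r (x.ie hx (t0 + 0)) = v
    rw [r_ie x hx, show t0 + 0 = t0 by omega, ht0v]
  -- x is c-periodic from t1 onwards
  have P : ∀ j : ℕ, x.vert (t1 + j) = G.r (c.edge (j % c.len)) ∧
      x.ie hx (t1 + j) = c.edge (j % c.len) := by
    intro j
    induction j using Nat.strong_induction_on with
    | _ j ih =>
      have hvj : x.vert (t1 + j) = G.r (c.edge (j % c.len)) := by
        cases j with
        | zero =>
          rw [show t1 + 0 = t1 by omega, Nat.zero_mod, ht1v, hvc0]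
        | succ k =>
          have hk := (ih k (by omega)).2
          rw [show t1 + (k + 1) = (t1 + k) + 1 by omega, ← s_ie x hx (t1 + k), hk]
          exact c.step k
      refine ⟨hvj, ?_⟩
      by_contra hne
      have hentry : c.IsEntry (x.ie hx (t1 + j)) :=
        ⟨j % c.len, c.mod_lt j, by rw [r_ie x hx, hvj], hne⟩
      obtain ⟨t2, ht2v, ht2⟩ := hfin.exists_gt (t1 + j)
      have ht2v' : x.vert t2 = v := ht2v
      set A := t2 - (t1 + j) with hA
      have hA1 : 1 ≤ A := by omega
      set jm := j % c.len with hjm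
      have hjmL : jm < c.len := c.mod_lt j
      have compat1 : ∀ k, k + 1 < A + jm →
          G.s ((fun k => if k < A then x.ie hx (t1 + j + k) else c.edge (k - A)) k) =
          G.r ((fun k => if k < A then x.ie hx (t1 + j + k) else c.edge (k - A))
            (k + 1)) := by
        intro k hk
        rcases Nat.lt_or_ge (k + 1) A with h1 | h1
        · simp only [if_pos (by omega : k < A), if_pos h1]
          rw [s_ie x hx, r_ie x hx, show t1 + j + k + 1 = t1 + j + (k + 1) by omega]
        rcases Nat.eq_or_lt_of_le h1 with h1' | h1'
        · simp only [if_pos (by omega : k < A), if_neg (by omega : ¬ k + 1 < A)]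
          rw [s_ie x hx, show t1 + j + k + 1 = t2 by omega, ht2v',
            show k + 1 - A = 0 by omega, hvc0]
        · simp only [if_neg (by omega : ¬ k < A), if_neg (by omega : ¬ k + 1 < A)]
          rw [show k + 1 - A = (k - A) + 1 by omega]
          exact c.compat (k - A) (by omega)
      have closed1 :
          G.s ((fun k => if k < A then x.ie hx (t1 + j + k) else c.edge (k - A))
            (A + jm - 1)) =
          G.r ((fun k => if k < A then x.ie hx (t1 + j + k) else c.edge (k - A)) 0) := by
        simp only [if_pos (by omega : 0 < A)]
        rw [r_ie x hx, show t1 + j + 0 = t1 + j by omega, hvj]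
        rcases Nat.eq_zero_or_pos jm with h1 | h1
        · rw [if_pos (by omega : A + jm - 1 < A), s_ie x hx,
            show t1 + j + (A + jm - 1) + 1 = t2 by omega, ht2v', h1, hvc0]
        · rw [if_neg (by omega : ¬ A + jm - 1 < A),
            show A + jm - 1 - A = jm - 1 by omega,
            c.compat (jm - 1) (by omega), show jm - 1 + 1 = jm by omega]
      obtain ⟨c', hc'⟩ := GWalk.exists_cycle ⟨A + jm, by omega,
        fun k => if k < A then x.ie hx (t1 + j + k) else c.edge (k - A),
        compat1, closed1⟩
      refine h c _ hentry c' ⟨0, c'.len_pos, ?_⟩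
      rw [hc']
      show (if 0 < A then x.ie hx (t1 + j + 0) else c.edge (0 - A)) = x.ie hx (t1 + j)
      rw [if_pos (by omega : 0 < A), show t1 + j + 0 = t1 + j by omega]
  have hvert : ∀ j, x.vert (t1 + j) = G.r (c.edge (j % c.len)) := fun j => (P j).1
  have key : ∀ z : LPath G, ∀ hz : z.Infinite, z.rng = x.vert t1 → z.ShiftEquiv x →
      ∀ j, z.edge j = some (c.edge (j % c.len)) := by
    intro z hz hzr hzx
    obtain ⟨lag, a, b, -, -, -, heq⟩ := hzx
    have hvert_eq : ∀ k, z.vert (a + k) = x.vert (b + k) := by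
      intro k
      rw [← vert_shift hz a k, heq, vert_shift hx b k]
    have Q : ∀ j, z.vert j = G.r (c.edge (j % c.len)) ∧
        z.ie hz j = c.edge (j % c.len) := by
      intro j
      induction j using Nat.strong_induction_on with
      | _ j ih =>
        have hvj : z.vert j = G.r (c.edge (j % c.len)) := by
          cases j with
          | zero =>
            show z.rng = G.r (c.edge (0 % c.len))
            rw [hzr, Nat.zero_mod, ht1v, hvc0]
          | succ k =>
            have hk := (ih k (by omega)).2
            rw [← s_ie z hz k, hk]
            exact c.step k
        refine ⟨hvj, ?_⟩
        by_contra hne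
        have hentry : c.IsEntry (z.ie hz j) :=
          ⟨j % c.len, c.mod_lt j, by rw [r_ie z hz, hvj], hne⟩
        set M := a + b + j + t1 + 1 with hM
        have hM1 : M ≤ c.len * M := Nat.le_mul_of_pos_left M c.len_pos
        set k := t1 + j + c.len * M - b with hkdef
        have hbk : b + k = t1 + (j + c.len * M) := by omega
        have hkj : j + 1 ≤ a + k := by omega
        have hvt : z.vert (a + k) = G.r (c.edge (j % c.len)) := by
          rw [hvert_eq k, hbk, hvert (j + c.len * M), Nat.add_mul_mod_self_left]
        have compat2 : ∀ i, i + 1 < a + k - j →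
            G.s ((fun i => z.ie hz (j + i)) i) =
            G.r ((fun i => z.ie hz (j + i)) (i + 1)) := by
          intro i _
          rw [s_ie z hz, r_ie z hz, show j + i + 1 = j + (i + 1) by omega]
        have closed2 : G.s ((fun i => z.ie hz (j + i)) (a + k - j - 1)) =
            G.r ((fun i => z.ie hz (j + i)) 0) := by
          rw [s_ie z hz, r_ie z hz, show j + (a + k - j - 1) + 1 = a + k by omega,
            show j + 0 = j by omega, hvt, hvj]
        obtain ⟨c', hc'⟩ := GWalk.exists_cycle ⟨a + k - j, by omega,
          fun i => z.ie hz (j + i), compat2, closed2⟩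
        refine h c _ hentry c' ⟨0, c'.len_pos, ?_⟩
        rw [hc']
        show z.ie hz (j + 0) = z.ie hz j
        rw [show j + 0 = j by omega]
    intro j
    rw [ie_spec z hz j, (Q j).2]
  obtain ⟨z, w, hne, hz, hw, hzr, hwr, hzx, hwx⟩ := h2 t1
  exact hne (ext' z w (hzr.trans hwr.symm)
    (fun j => (key z hz hzr hzx j).trans (key w hw hwr hwx j).symm))

end LPath
end Aux3
open LPath

/-- Let `E` be a directed graph in which no entry to a cycle is in a cycle, and
suppose there is `x ∈ E^∞` such that each set `x(n)E^∞ ∩ [x]` has more than one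
element.  Then there is `y ∈ E^∞` containing no cycle such that each set
`y(n)E^∞ ∩ [y]` has more than one element. -/
theorem stmt17 (G : DGraph)
    (h : ∀ c : DCycle G, ∀ f : G.E, c.IsEntry f → ∀ c' : DCycle G, ¬ c'.EdgeMem f)
    (x : LPath G) (hx : x.Infinite)
    (h2 : ∀ n : ℕ, ∃ z w : LPath G, z ≠ w ∧ z.Infinite ∧ w.Infinite ∧
      z.rng = x.vert n ∧ w.rng = x.vert n ∧
      LPath.ShiftEquiv z x ∧ LPath.ShiftEquiv w x) :
    ∃ y : LPath G, y.Infinite ∧ ¬ y.ContainsCycle ∧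
      ∀ n : ℕ, ∃ z w : LPath G, z ≠ w ∧ z.Infinite ∧ w.Infinite ∧
        z.rng = y.vert n ∧ w.rng = y.vert n ∧
        LPath.ShiftEquiv z y ∧ LPath.ShiftEquiv w y := by
  classical
  have hfin := LPath.visits_finite h x hx h2
  have hlast : ∀ p : ℕ, ∃ m, x.vert m = x.vert p ∧ ∀ t, x.vert t = x.vert p → t ≤ m := by
    intro p
    have hne : ((hfin (x.vert p)).toFinset).Nonempty := ⟨p, by simp⟩
    refine ⟨((hfin (x.vert p)).toFinset).max' hne, ?_, ?_⟩
    · have := Finset.max'_mem _ hne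
      simpa using this
    · intro t ht
      exact Finset.le_max' _ t (by simpa using ht)
  choose lastAt hl1 hl2 using hlast
  set Q : ℕ → ℕ := fun n => Nat.rec (lastAt 0) (fun _ prev => lastAt (prev + 1)) n with hQ
  have hQv : ∀ n, x.vert (Q (n + 1)) = x.vert (Q n + 1) := fun n => hl1 _
  have hQv0 : x.vert (Q 0) = x.vert 0 := hl1 0
  have hQmax : ∀ n t, x.vert t = x.vert (Q n) → t ≤ Q n := by
    intro n t ht
    cases n with
    | zero => exact hl2 0 t (ht.trans hQv0)
    | succ m => exact hl2 (Q m + 1) t (ht.trans (hQv m))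
  have hQmono : ∀ n, Q n + 1 ≤ Q (n + 1) := fun n => hl2 (Q n + 1) (Q n + 1) rfl
  have hxs : ∀ i, x.edge i ≠ none := by
    intro i hnone
    have := hx i
    rw [hnone] at this
    simp at this
  set y : LPath G :=
    { rng := x.rng
      edge := fun n => x.edge (Q n)
      edge_closed := fun i hi => absurd hi (hxs (Q i))
      rng_compat := by
        intro e he
        have h1 := x.vert_eq (Q 0) e he
        rw [hQv0] at h1
        exact h1
      compat := by
        intro i e f he hf
        have h1 : x.vert (Q i + 1) = G.s e := x.vert_some he
        have hr : G.r f = x.vert (Q (i + 1)) := x.vert_eq _ f hf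
        rw [hQv i] at hr
        exact (hr.trans h1).symm } with hydef
  have hyinf : y.Infinite := fun i => hx (Q i)
  have hyv : ∀ n, y.vert n = x.vert (Q n) := by
    intro n
    cases n with
    | zero => exact hQv0.symm
    | succ m =>
      have he : y.edge m = some (x.ie hx (Q m)) := x.ie_spec hx (Q m)
      rw [y.vert_some he, s_ie x hx (Q m)]
      exact (hQv m).symm
  have hsm : StrictMono Q := strictMono_nat_of_lt_succ (fun n => by
    have := hQmono n; omega)
  have hyinj : ∀ a b, y.vert a = y.vert b → a = b := by
    intro a b hab
    rw [hyv, hyv] at hab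
    have h1 : Q a ≤ Q b := hQmax b (Q a) hab
    have h2' : Q b ≤ Q a := hQmax a (Q b) hab.symm
    exact hsm.injective (le_antisymm h1 h2')
  refine ⟨y, hyinf, ?_, ?_⟩
  · rintro ⟨m, n, hmn, -, hv, -⟩
    exact absurd (hyinj m n hv) (by omega)
  intro n
  by_cases hcase : ∃ m, n ≤ m ∧ ∃ p, p < Q m ∧ x.vert p = x.vert (Q m)
  · -- case (i): insert a closed excursion of x at the vertex y(m)
    obtain ⟨m, hnm, p, hpQ, hpv⟩ := hcase
    set D := Q m - p with hD
    have hD1 : 1 ≤ D := by omega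
    have hpD : p + D = Q m := by omega
    set w : LPath G :=
      { rng := y.vert n
        edge := fun k => if k < m - n then y.edge (n + k)
          else if k < (m - n) + D then x.edge (p + (k - (m - n)))
          else y.edge (n + (k - D))
        edge_closed := by
          intro i hi
          exfalso
          split_ifs at hi
          · exact hxs _ hi
          · exact hxs _ hi
          · exact hxs _ hi
        rng_compat := by
          intro e he
          by_cases h1 : 0 < m - n
          · rw [if_pos h1] at he
            have := y.vert_eq n e (by rwa [show n + 0 = n by omega] at he)
            exact this
          · rw [if_neg (by omega), if_pos (by omega)] at he
            have h3 := x.vert_eq p e (by rwa [show p + (0 - (m - n)) = p by omega] at he)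
            rw [h3, hpv, ← hyv m, show m = n by omega]
        compat := by
          intro i e f he hf
          by_cases h1 : i + 1 < m - n
          · rw [if_pos (by omega)] at he
            rw [if_pos h1] at hf
            exact y.compat (n + i) e f he
              (by rwa [show n + i + 1 = n + (i + 1) by omega])
          by_cases h2' : i + 1 = m - n
          · rw [if_pos (by omega)] at he
            rw [if_neg (by omega), if_pos (by omega),
              show i + 1 - (m - n) = 0 by omega] at hf
            have hse : G.s e = y.vert (n + i + 1) := (y.vert_some he).symm
            have hrf : G.r f = x.vert (p + 0) := x.vert_eq _ f hf
            rw [hse, hrf, show p + 0 = p by omega, show n + i + 1 = m by omega,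
              hyv m, hpv]
          by_cases h3 : i + 1 < (m - n) + D
          · rw [if_neg (by omega), if_pos (by omega)] at he
            rw [if_neg (by omega), if_pos h3] at hf
            exact x.compat (p + (i - (m - n))) e f he
              (by rwa [show p + (i - (m - n)) + 1 = p + (i + 1 - (m - n)) by omega])
          by_cases h4 : i + 1 = (m - n) + D
          · rw [if_neg (by omega), if_pos (by omega)] at he
            rw [if_neg (by omega), if_neg (by omega),
              show n + (i + 1 - D) = m by omega] at hf
            have hse : G.s e = x.vert (p + (i - (m - n)) + 1) := (x.vert_some he).symm
            have hrf : G.r f = y.vert m := y.vert_eq _ f hf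
            rw [hse, hrf, show p + (i - (m - n)) + 1 = Q m by omega, hyv m]
          · rw [if_neg (by omega), if_neg (by omega)] at he
            rw [if_neg (by omega), if_neg (by omega)] at hf
            exact y.compat (n + (i - D)) e f he
              (by rwa [show n + (i - D) + 1 = n + (i + 1 - D) by omega]) } with hwdef
    have hwinf : w.Infinite := by
      intro i
      show ((if i < m - n then y.edge (n + i)
          else if i < (m - n) + D then x.edge (p + (i - (m - n)))
          else y.edge (n + (i - D)))).isSome
      split_ifs
      · exact hyinf _
      · exact hx _
      · exact hyinf _
    have hwe : w.edge ((m - n) + D) = some (y.ie hyinf m) := by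
      show (if (m - n) + D < m - n then y.edge (n + ((m - n) + D))
          else if (m - n) + D < (m - n) + D then x.edge (p + ((m - n) + D - (m - n)))
          else y.edge (n + ((m - n) + D - D))) = some (y.ie hyinf m)
      rw [if_neg (by omega), if_neg (by omega), show n + ((m - n) + D - D) = m by omega]
      exact y.ie_spec hyinf m
    have hwv : w.vert ((m - n) + D) = y.vert m := by
      rw [← w.vert_eq _ _ hwe, r_ie y hyinf m]
    have hzw : y.shift n ≠ w := by
      intro hzw
      have hK : (y.shift n).vert ((m - n) + D) = w.vert ((m - n) + D) := by rw [hzw]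
      rw [vert_shift hyinf, hwv] at hK
      have := hyinj _ _ hK
      omega
    have hweq : w.shift ((m - n) + D) = y.shift m := by
      refine ext' _ _ ?_ ?_
      · exact hwv
      · intro i
        show w.edge ((m - n) + D + i) = y.edge (m + i)
        show (if (m - n) + D + i < m - n then y.edge (n + ((m - n) + D + i))
          else if (m - n) + D + i < (m - n) + D then
            x.edge (p + ((m - n) + D + i - (m - n)))
          else y.edge (n + ((m - n) + D + i - D))) = y.edge (m + i)
        rw [if_neg (by omega), if_neg (by omega),
          show n + ((m - n) + D + i - D) = m + i by omega]
    exact ⟨y.shift n, w, hzw, shift_infinite hyinf n, hwinf, rfl, rfl,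
      shiftEquiv_of_shift_eq (shift_infinite hyinf n) hyinf 0 n shift_zero,
      shiftEquiv_of_shift_eq hwinf hyinf ((m - n) + D) m hweq⟩
  · -- case (ii): the erasure is trivial beyond n, so y is shift equivalent to x
    push_neg at hcase
    have hQstep : ∀ i, Q (n + i) = Q n + i := by
      intro i
      induction i with
      | zero => rfl
      | succ k ihk =>
        have h1 : Q (n + k) + 1 ≤ Q (n + k + 1) := hQmono (n + k)
        have hv2 : x.vert (Q (n + k) + 1) = x.vert (Q (n + k + 1)) := (hQv (n + k)).symm
        have h3 : ¬ (Q (n + k) + 1 < Q (n + k + 1)) :=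
          fun hlt => hcase (n + k + 1) (by omega) (Q (n + k) + 1) hlt hv2
        rw [show n + (k + 1) = n + k + 1 by omega]
        omega
    have hshift : y.shift n = x.shift (Q n) := by
      refine ext' _ _ (hyv n) ?_
      intro i
      show y.edge (n + i) = x.edge (Q n + i)
      show x.edge (Q (n + i)) = x.edge (Q n + i)
      rw [hQstep i]
    have hyx : y.ShiftEquiv x := shiftEquiv_of_shift_eq hyinf hx n (Q n) hshift
    obtain ⟨z, w, hne, hz, hw, hzr, hwr, hzx, hwx⟩ := h2 (Q n)
    exact ⟨z, w, hne, hz, hw, hzr.trans (hyv n).symm, hwr.trans (hyv n).symm,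
      seq_trans hz hx hyinf hzx hyx, seq_trans hw hx hyinf hwx hyx⟩
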